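/- arXiv:1909.10749 — 6 statements merged into one kernel-verified Lean document; each statement's English description precedes it below -/
import Mathlib

section
/- Let g : [0,∞) → ℝ be twice continuously differentiable with g(0) = 0, g' > 0 on [0,∞), and suppose there is x* > 0 with g'' < 0 on (0, x*) and g'' > 0 on (x*, ∞), and g'(x) → ∞ as x → ∞. Then the equation g'(x̄)·x̄ - g(x̄) = 0 has exactly one solution x̄ in (0, ∞), and this solution satisfies x̄ > x*. -/
/-!
Put `F x = g' x * x - g x`, so `F 0 = 0` and `F' x = g'' x * x`. Hence `F` decreases strictly on
`[0, x*]` (so it is negative on `(0, x*]`) and increases strictly on `[x*, ∞)`. Moreover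
`F - x* g'` has derivative `g'' x * (x - x*) ≥ 0` on `[x*, ∞)`, so `F ≥ x* g' + const` there and
`F → ∞`. The intermediate value theorem gives a zero beyond `x*`, and strict monotonicity makes it
the only positive one.
-/

open Set Filter

theorem exists_unique_pos_zero_of_strictAntiOn_of_strictMonoOn {F : ℝ → ℝ} {a : ℝ} (ha : 0 < a)
    (hF0 : F 0 = 0) (hanti : StrictAntiOn F (Icc 0 a)) (hmono : StrictMonoOn F (Ici a))
    (hcont : ContinuousOn F (Ici a)) (htop : Tendsto F atTop atTop) :
    ∃ b, a < b ∧ F b = 0 ∧ ∀ y, 0 < y → F y = 0 → y = b := by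
  have hneg : ∀ y ∈ Ioc 0 a, F y < 0 := fun y hy =>
    hF0 ▸ hanti (left_mem_Icc.2 ha.le) (Ioc_subset_Icc_self hy) hy.1
  obtain ⟨M, hFM, haM⟩ := ((htop.eventually_gt_atTop 0).and (eventually_ge_atTop a)).exists
  obtain ⟨b, hb, hFb⟩ := intermediate_value_Ioo haM (hcont.mono Icc_subset_Ici_self)
    ⟨hneg a ⟨ha, le_rfl⟩, hFM⟩
  refine ⟨b, hb.1, hFb, fun y hy hFy => ?_⟩
  have hay : a ≤ y := by
    by_contra! hya
    exact (hneg y ⟨hy, hya.le⟩).ne hFy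
  exact hmono.injOn hay hb.1.le (hFy.trans hFb.symm)

theorem tendsto_atTop_of_monotoneOn_sub_const_mul {F G : ℝ → ℝ} {a c : ℝ} (hc : 0 < c)
    (hmono : MonotoneOn (fun x => F x - c * G x) (Ici a)) (hG : Tendsto G atTop atTop) :
    Tendsto F atTop atTop := by
  refine tendsto_atTop_mono' _ ?_ ((hG.const_mul_atTop hc).atTop_add
    (tendsto_const_nhds (x := F a - c * G a)))
  filter_upwards [eventually_ge_atTop a] with x hx
  linarith [hmono self_mem_Ici hx hx]

/-- Minus the intercept at `0` of the tangent line to `g` at `x`. -/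
noncomputable def tangentGap (g : ℝ → ℝ) (x : ℝ) : ℝ := deriv g x * x - g x

theorem hasDerivAt_tangentGap {g : ℝ → ℝ} {x : ℝ} (hg : DifferentiableAt ℝ g x)
    (hg' : DifferentiableAt ℝ (deriv g) x) :
    HasDerivAt (tangentGap g) (deriv (deriv g) x * x) x :=
  ((hg'.hasDerivAt.mul (hasDerivAt_id' x)).sub hg.hasDerivAt).congr_deriv (by ring)

theorem continuousOn_tangentGap {g : ℝ → ℝ} (hg : ContDiffOn ℝ 1 g (Ici 0)) :
    ContinuousOn (tangentGap g) (Ici 0) := by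
  refine (((hg.continuousOn_derivWithin (uniqueDiffOn_Ici 0) le_rfl).mul continuousOn_id).sub
    hg.continuousOn).congr fun x hx => ?_
  rcases (mem_Ici.1 hx).eq_or_lt with rfl | hx
  · simp [tangentGap]
  · simp [tangentGap, derivWithin_of_mem_nhds (Ici_mem_nhds hx)]

theorem ContDiffOn.differentiableAt_of_pos {g : ℝ → ℝ} (hg : ContDiffOn ℝ 2 g (Ici 0)) {x : ℝ}
    (hx : 0 < x) : DifferentiableAt ℝ g x :=
  (hg.differentiableOn two_ne_zero).differentiableAt (Ici_mem_nhds hx)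

theorem ContDiffOn.differentiableAt_deriv_of_pos {g : ℝ → ℝ} (hg : ContDiffOn ℝ 2 g (Ici 0))
    {x : ℝ} (hx : 0 < x) : DifferentiableAt ℝ (deriv g) x :=
  (((hg.mono Ioi_subset_Ici_self).deriv_of_isOpen isOpen_Ioi (by norm_num)).differentiableOn
    one_ne_zero).differentiableAt (Ioi_mem_nhds hx)

theorem ContDiffOn.hasDerivAt_tangentGap {g : ℝ → ℝ} (hg : ContDiffOn ℝ 2 g (Ici 0)) {x : ℝ}
    (hx : 0 < x) : HasDerivAt (tangentGap g) (deriv (deriv g) x * x) x :=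
  _root_.hasDerivAt_tangentGap (hg.differentiableAt_of_pos hx) (hg.differentiableAt_deriv_of_pos hx)

theorem strictAntiOn_tangentGap {g : ℝ → ℝ} {a : ℝ} (hg : ContDiffOn ℝ 2 g (Ici 0))
    (hconc : ∀ x ∈ Ioo 0 a, deriv (deriv g) x < 0) : StrictAntiOn (tangentGap g) (Icc 0 a) := by
  refine strictAntiOn_of_hasDerivWithinAt_neg (f' := fun x => deriv (deriv g) x * x)
    (convex_Icc 0 a)
    ((continuousOn_tangentGap (hg.of_le one_le_two)).mono Icc_subset_Ici_self)
    (fun x hx => ?_) fun x hx => ?_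
  all_goals rw [interior_Icc] at hx
  · exact (hg.hasDerivAt_tangentGap hx.1).hasDerivWithinAt
  · exact mul_neg_of_neg_of_pos (hconc x hx) hx.1

theorem strictMonoOn_tangentGap {g : ℝ → ℝ} {a : ℝ} (hg : ContDiffOn ℝ 2 g (Ici 0)) (ha : 0 < a)
    (hconv : ∀ x, a < x → 0 < deriv (deriv g) x) : StrictMonoOn (tangentGap g) (Ici a) := by
  refine strictMonoOn_of_hasDerivWithinAt_pos (f' := fun x => deriv (deriv g) x * x)
    (convex_Ici a)
    ((continuousOn_tangentGap (hg.of_le one_le_two)).mono (Ici_subset_Ici.2 ha.le))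
    (fun x hx => ?_) fun x hx => ?_
  all_goals rw [interior_Ici] at hx
  · exact (hg.hasDerivAt_tangentGap (ha.trans hx)).hasDerivWithinAt
  · exact mul_pos (hconv x hx) (ha.trans hx)

theorem monotoneOn_tangentGap_sub_mul_deriv {g : ℝ → ℝ} {a : ℝ} (hg : ContDiffOn ℝ 2 g (Ici 0))
    (ha : 0 < a) (hconv : ∀ x, a < x → 0 < deriv (deriv g) x) :
    MonotoneOn (fun x => tangentGap g x - a * deriv g x) (Ici a) := by
  refine monotoneOn_of_hasDerivWithinAt_nonneg
    (f' := fun x => deriv (deriv g) x * x - a * deriv (deriv g) x) (convex_Ici a)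
    (((continuousOn_tangentGap (hg.of_le one_le_two)).mono (Ici_subset_Ici.2 ha.le)).sub
      (continuousOn_const.mul fun x hx =>
        (hg.differentiableAt_deriv_of_pos (ha.trans_le hx)).continuousAt.continuousWithinAt))
    (fun x hx => ?_) fun x hx => ?_
  all_goals rw [interior_Ici] at hx
  · exact ((hg.hasDerivAt_tangentGap (ha.trans hx)).sub
      ((hg.differentiableAt_deriv_of_pos (ha.trans hx)).hasDerivAt.const_mul a)).hasDerivWithinAt
  · nlinarith [mul_pos (hconv x hx) (sub_pos.2 hx)]

theorem stmt6_general (g : ℝ → ℝ) (xstar : ℝ)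
    (hC2 : ContDiffOn ℝ 2 g (Set.Ici 0))
    (h0 : g 0 = 0)
    (hxs : 0 < xstar)
    (hconc : ∀ x ∈ Set.Ioo 0 xstar, deriv (deriv g) x < 0)
    (hconv : ∀ x : ℝ, xstar < x → 0 < deriv (deriv g) x)
    (hinf : Filter.Tendsto (deriv g) Filter.atTop Filter.atTop) :
    ∃ xb : ℝ, xstar < xb ∧ deriv g xb * xb - g xb = 0 ∧
      ∀ y : ℝ, 0 < y → deriv g y * y - g y = 0 → y = xb :=
  exists_unique_pos_zero_of_strictAntiOn_of_strictMonoOn hxs (by simp [h0])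
    (strictAntiOn_tangentGap hC2 hconc) (strictMonoOn_tangentGap hC2 hxs hconv)
    ((continuousOn_tangentGap (hC2.of_le one_le_two)).mono (Ici_subset_Ici.2 hxs.le))
    (tendsto_atTop_of_monotoneOn_sub_const_mul hxs
      (monotoneOn_tangentGap_sub_mul_deriv hC2 hxs hconv) hinf)

theorem stmt6 (g : ℝ → ℝ) (xstar : ℝ)
    (hC2 : ContDiffOn ℝ 2 g (Set.Ici 0))
    (h0 : g 0 = 0) (hd : ∀ x : ℝ, 0 ≤ x → 0 < deriv g x)
    (hxs : 0 < xstar)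
    (hconc : ∀ x ∈ Set.Ioo 0 xstar, deriv (deriv g) x < 0)
    (hconv : ∀ x : ℝ, xstar < x → 0 < deriv (deriv g) x)
    (hinf : Filter.Tendsto (deriv g) Filter.atTop Filter.atTop) :
    ∃ xb : ℝ, xstar < xb ∧ deriv g xb * xb - g xb = 0 ∧
      ∀ y : ℝ, 0 < y → deriv g y * y - g y = 0 → y = xb :=
  stmt6_general g xstar hC2 h0 hxs hconc hconv hinf
end

section
/- Let g be C² on [0,∞) with g(0)=0, g' > 0, g'' < 0 on (0,x*), g'' > 0 on (x*,∞) for some x* > 0, and g'(x) → ∞ as x → ∞. Then for every x̲ ∈ (0, x*) there exists a unique x̄ > x̲ satisfying the smooth-fit equation g'(x̄) = (g(x̄) - g(x̲))/(x̄ - x̲), and this x̄ satisfies x̄ > x*. Moreover if x̲ ≥ x* then no x̄ > x̲ satisfies this equation. -/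
/-!
Write `G_a(x) = g'(x) (x - a) - (g(x) - g(a))` (`smoothFitGap g a x`), so that for `x ≠ a` the smooth-fit equation
says `G_a(x) = 0`. Since `G_a(a) = 0` and `G_a'(x) = g''(x) (x - a)`, the sign pattern of `g''`
makes `G_a` strictly decreasing on `[a, x*]` and strictly increasing on `[x*, ∞)` when `a < x*`,
and strictly increasing on `[a, ∞)` when `a ≥ x*`. In the second case `G_a > 0` to the right of
`a`. In the first, `G_a < 0` on `(a, x*]`, while convexity of `g` past `x*` gives
`G_a(x) ≥ (x* - a) g'(x) - (g(x*) - g(a)) → ∞`, so `G_a` has exactly one zero beyond `a`,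
and it lies beyond `x*`.
-/

open Set Filter

noncomputable def smoothFitGap (g : ℝ → ℝ) (a x : ℝ) : ℝ :=
  deriv g x * (x - a) - (g x - g a)

namespace smoothFitGap

variable {g : ℝ → ℝ} {s : Set ℝ} {a c x : ℝ}

lemma self_eq_zero : smoothFitGap g a a = 0 := by
  simp [smoothFitGap]

lemma eq_zero_iff (hx : x ≠ a) :
    smoothFitGap g a x = 0 ↔ deriv g x = (g x - g a) / (x - a) := by
  rw [eq_div_iff (sub_ne_zero.mpr hx), smoothFitGap, sub_eq_zero]

lemma eq_add (a c x : ℝ) :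
    smoothFitGap g a x = smoothFitGap g c x + (c - a) * deriv g x - (g c - g a) := by
  simp only [smoothFitGap]
  ring

lemma hasDerivAt (hg : ContDiffOn ℝ 2 g s) (hs : IsOpen s) (hx : x ∈ s) :
    HasDerivAt (smoothFitGap g a) (deriv (deriv g) x * (x - a)) x := by
  have hnhds : s ∈ nhds x := hs.mem_nhds hx
  have hg1 : DifferentiableAt ℝ g x :=
    (hg.differentiableOn (by norm_num)).differentiableAt hnhds
  have hg2 : DifferentiableAt ℝ (deriv g) x :=
    ((hg.deriv_of_isOpen hs (m := 1) (by norm_num)).differentiableOn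
      (by norm_num)).differentiableAt hnhds
  have h : HasDerivAt (smoothFitGap g a)
      (deriv (deriv g) x * (x - a) + deriv g x * 1 - deriv g x) x :=
    (hg2.hasDerivAt.mul ((hasDerivAt_id x).sub_const a)).sub (hg1.hasDerivAt.sub_const (g a))
  simpa using h

lemma continuousOn (hg : ContDiffOn ℝ 2 g s) (hs : IsOpen s) :
    ContinuousOn (smoothFitGap g a) s := fun _ hx =>
  (hasDerivAt hg hs hx).continuousAt.continuousWithinAt

lemma strictMonoOn_Ici (hg : ContDiffOn ℝ 2 g s) (hs : IsOpen s) (hcs : Ici c ⊆ s)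
    (hac : a ≤ c) (hconv : ∀ x, c < x → 0 < deriv (deriv g) x) :
    StrictMonoOn (smoothFitGap g a) (Ici c) := by
  refine strictMonoOn_of_deriv_pos (convex_Ici c) ((continuousOn hg hs).mono hcs) ?_
  intro x hx
  rw [interior_Ici] at hx
  rw [(hasDerivAt hg hs (hcs (mem_Ici_of_Ioi hx))).deriv]
  exact mul_pos (hconv x hx) (by linarith [mem_Ioi.mp hx])

lemma strictAntiOn_Icc (hg : ContDiffOn ℝ 2 g s) (hs : IsOpen s) (hacs : Icc a c ⊆ s)
    (hconc : ∀ x ∈ Ioo a c, deriv (deriv g) x < 0) :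
    StrictAntiOn (smoothFitGap g a) (Icc a c) := by
  refine strictAntiOn_of_deriv_neg (convex_Icc a c) ((continuousOn hg hs).mono hacs) ?_
  intro x hx
  rw [interior_Icc] at hx
  rw [(hasDerivAt hg hs (hacs (Ioo_subset_Icc_self hx))).deriv]
  exact mul_neg_of_neg_of_pos (hconc x hx) (by linarith [hx.1])

lemma neg_of_mem_Ioc (hg : ContDiffOn ℝ 2 g s) (hs : IsOpen s) (hacs : Icc a c ⊆ s)
    (hconc : ∀ x ∈ Ioo a c, deriv (deriv g) x < 0) (hx : x ∈ Ioc a c) :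
    smoothFitGap g a x < 0 := by
  have hac : a ≤ c := hx.1.le.trans hx.2
  simpa only [self_eq_zero] using strictAntiOn_Icc hg hs hacs hconc
    (left_mem_Icc.mpr hac) (Ioc_subset_Icc_self hx) hx.1

lemma tendsto_atTop (hg : ContDiffOn ℝ 2 g s) (hs : IsOpen s) (hcs : Ici c ⊆ s) (hac : a < c)
    (hconv : ∀ x, c < x → 0 < deriv (deriv g) x) (hinf : Tendsto (deriv g) atTop atTop) :
    Tendsto (smoothFitGap g a) atTop atTop := by
  have hlower : ∀ᶠ x in atTop,
      (c - a) * deriv g x - (g c - g a) ≤ smoothFitGap g a x := by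
    filter_upwards [eventually_ge_atTop c] with x hx
    -- convexity of `g` on `[c, x]`, in the form `g x - g c ≤ g' x * (x - c)`
    have hGc : 0 ≤ smoothFitGap g c x := by
      simpa only [self_eq_zero] using
        (strictMonoOn_Ici hg hs hcs le_rfl hconv).monotoneOn self_mem_Ici hx hx
    linarith [eq_add (g := g) a c x]
  exact tendsto_atTop_mono' atTop hlower
    (tendsto_atTop_add_const_right _ _ (hinf.const_mul_atTop (sub_pos.mpr hac)))

lemma existsUnique_zero (hg : ContDiffOn ℝ 2 g s) (hs : IsOpen s) (hacs : Icc a c ⊆ s)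
    (hcs : Ici c ⊆ s) (hac : a < c) (hconc : ∀ x ∈ Ioo a c, deriv (deriv g) x < 0)
    (hconv : ∀ x, c < x → 0 < deriv (deriv g) x) (hinf : Tendsto (deriv g) atTop atTop) :
    ∃ b, c < b ∧ smoothFitGap g a b = 0 ∧ ∀ y, a < y → smoothFitGap g a y = 0 → y = b := by
  have hGc : smoothFitGap g a c < 0 := neg_of_mem_Ioc hg hs hacs hconc ⟨hac, le_rfl⟩
  obtain ⟨M, hcM, hGM⟩ : ∃ M, c ≤ M ∧ 0 < smoothFitGap g a M :=
    ((eventually_ge_atTop c).and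
      ((tendsto_atTop hg hs hcs hac hconv hinf).eventually_gt_atTop 0)).exists
  obtain ⟨b, hbcM, hb⟩ := intermediate_value_Icc hcM
    ((continuousOn hg hs).mono (Icc_subset_Ici_self.trans hcs)) ⟨hGc.le, hGM.le⟩
  have hcb : c < b := lt_of_le_of_ne hbcM.1 (by rintro rfl; exact hGc.ne hb)
  refine ⟨b, hcb, hb, fun y hay hy => ?_⟩
  have hcy : c < y := not_le.mp fun hyc => (neg_of_mem_Ioc hg hs hacs hconc ⟨hay, hyc⟩).ne hy
  exact (strictMonoOn_Ici hg hs hcs hac.le hconv).injOn hcy.le hcb.le (hy.trans hb.symm)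

end smoothFitGap

theorem stmt7_general (g : ℝ → ℝ) (xstar : ℝ)
    (hC2 : ContDiffOn ℝ 2 g (Set.Ici 0))
    (hxs : 0 < xstar)
    (hconc : ∀ x ∈ Set.Ioo 0 xstar, deriv (deriv g) x < 0)
    (hconv : ∀ x : ℝ, xstar < x → 0 < deriv (deriv g) x)
    (hinf : Filter.Tendsto (deriv g) Filter.atTop Filter.atTop) :
    (∀ xl ∈ Set.Ioo 0 xstar,
      ∃ xb : ℝ, xl < xb ∧ xstar < xb ∧
        deriv g xb = (g xb - g xl) / (xb - xl) ∧
        ∀ y : ℝ, xl < y → deriv g y = (g y - g xl) / (y - xl) → y = xb) ∧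
    (∀ xl : ℝ, xstar ≤ xl →
      ¬ ∃ xb : ℝ, xl < xb ∧ deriv g xb = (g xb - g xl) / (xb - xl)) := by
  have hg : ContDiffOn ℝ 2 g (Ioi 0) := hC2.mono Ioi_subset_Ici_self
  have hIci : ∀ {c : ℝ}, 0 < c → Ici c ⊆ Ioi 0 := fun hc _ hx => hc.trans_le hx
  constructor
  · rintro xl ⟨hxl, hxls⟩
    obtain ⟨xb, hxsb, hxb, huniq⟩ := smoothFitGap.existsUnique_zero hg isOpen_Ioi
      (Icc_subset_Ici_self.trans (hIci hxl)) (hIci hxs) hxls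
      (fun x hx => hconc x ⟨hxl.trans hx.1, hx.2⟩) hconv hinf
    have hxlb : xl < xb := hxls.trans hxsb
    refine ⟨xb, hxlb, hxsb, (smoothFitGap.eq_zero_iff hxlb.ne').mp hxb, fun y hy hfit => ?_⟩
    exact huniq y hy ((smoothFitGap.eq_zero_iff hy.ne').mpr hfit)
  · rintro xl hxl ⟨xb, hxlb, hfit⟩
    have hpos : smoothFitGap g xl xl < smoothFitGap g xl xb :=
      smoothFitGap.strictMonoOn_Ici hg isOpen_Ioi (hIci (hxs.trans_le hxl)) le_rfl
        (fun x hx => hconv x (hxl.trans_lt hx)) self_mem_Ici hxlb.le hxlb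
    rw [smoothFitGap.self_eq_zero, ((smoothFitGap.eq_zero_iff hxlb.ne').mpr hfit)] at hpos
    exact lt_irrefl 0 hpos

theorem stmt7 (g : ℝ → ℝ) (xstar : ℝ)
    (hC2 : ContDiffOn ℝ 2 g (Set.Ici 0))
    (h0 : g 0 = 0) (hd : ∀ x : ℝ, 0 ≤ x → 0 < deriv g x)
    (hxs : 0 < xstar)
    (hconc : ∀ x ∈ Set.Ioo 0 xstar, deriv (deriv g) x < 0)
    (hconv : ∀ x : ℝ, xstar < x → 0 < deriv (deriv g) x)
    (hinf : Filter.Tendsto (deriv g) Filter.atTop Filter.atTop) :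
    (∀ xl ∈ Set.Ioo 0 xstar,
      ∃ xb : ℝ, xl < xb ∧ xstar < xb ∧
        deriv g xb = (g xb - g xl) / (xb - xl) ∧
        ∀ y : ℝ, xl < y → deriv g y = (g y - g xl) / (y - xl) → y = xb) ∧
    (∀ xl : ℝ, xstar ≤ xl →
      ¬ ∃ xb : ℝ, xl < xb ∧ deriv g xb = (g xb - g xl) / (xb - xl)) :=
  stmt7_general g xstar hC2 hxs hconc hconv hinf
end

section
/- Let g be C² on [0,∞) with g(0)=0, g'>0, strictly concave on (0,x*) and strictly convex on (x*,∞) for some x*>0, with g'(x)→∞ as x→∞. Define the map x̲ ↦ x̄(x̲) on (0,x*) assigning to x̲ the unique x̄ > x* with g'(x̄)(x̄ - x̲) = g(x̄) - g(x̲). Then x̄(·) is strictly decreasing and continuous, and x̄(x̲) → x* as x̲ → x* from below. -/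
theorem stmt8 (g : ℝ → ℝ) (xstar : ℝ) (barFn : ℝ → ℝ)
    (hC2 : ContDiffOn ℝ 2 g (Set.Ici 0))
    (h0 : g 0 = 0) (hd : ∀ x : ℝ, 0 ≤ x → 0 < deriv g x)
    (hxs : 0 < xstar)
    (hconc : StrictConcaveOn ℝ (Set.Ioo 0 xstar) g)
    (hconv : StrictConvexOn ℝ (Set.Ioi xstar) g)
    (hinf : Filter.Tendsto (deriv g) Filter.atTop Filter.atTop)
    (hbar : ∀ xl ∈ Set.Ioo 0 xstar,
      xstar < barFn xl ∧
      deriv g (barFn xl) * (barFn xl - xl) = g (barFn xl) - g xl ∧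
      ∀ y : ℝ, xstar < y → deriv g y * (y - xl) = g y - g xl → y = barFn xl) :
    StrictAntiOn barFn (Set.Ioo 0 xstar) ∧
    ContinuousOn barFn (Set.Ioo 0 xstar) ∧
    Filter.Tendsto barFn (nhdsWithin xstar (Set.Iio xstar)) (nhds xstar) := by
  have hC2' : ContDiffOn ℝ 2 g (Set.Ioi 0) := hC2.mono Set.Ioi_subset_Ici_self
  have hdiff : ∀ x ∈ Set.Ioi (0:ℝ), DifferentiableAt ℝ g x := fun x hx =>
    (hC2'.contDiffAt (isOpen_Ioi.mem_nhds hx)).differentiableAt (by norm_num)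
  have hgc : ContinuousOn g (Set.Ioi 0) := fun x hx => (hdiff x hx).continuousAt.continuousWithinAt
  have hdcont : ContinuousOn (deriv g) (Set.Ioi 0) := by
    have h2 : ContDiffOn ℝ (1+1) g (Set.Ioi 0) := by norm_num; exact hC2'
    exact ((contDiffOn_succ_iff_deriv_of_isOpen isOpen_Ioi).mp h2).2.2.continuousOn
  have hIoiIoi : Set.Ioi xstar ⊆ Set.Ioi (0:ℝ) := fun x hx => lt_trans hxs hx
  have hdiff' : ∀ x ∈ Set.Ioi xstar, DifferentiableAt ℝ g x := fun x hx => hdiff x (hIoiIoi hx)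
  have hmono : StrictMonoOn (deriv g) (Set.Ioi xstar) := hconv.strictMonoOn_deriv hdiff'
  -- monotonicity of the defect function in y
  have Dmono : ∀ xl a b : ℝ, xl < a → xstar < a → a < b →
      deriv g a * (a - xl) - (g a - g xl) < deriv g b * (b - xl) - (g b - g xl) := by
    intro xl a b hxla ha hab
    have hb : xstar < b := ha.trans hab
    have h1 : slope g a b < deriv g b :=
      hconv.slope_lt_deriv ha hb hab (hdiff' b hb)
    rw [slope_def_field, div_lt_iff₀ (by linarith)] at h1
    have h2 : deriv g a < deriv g b := hmono ha hb hab
    nlinarith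
  -- root localization
  have rootlt : ∀ xl ∈ Set.Ioo 0 xstar, ∀ y : ℝ, xstar < y →
      0 < deriv g y * (y - xl) - (g y - g xl) → barFn xl < y := by
    intro xl hxl y hy hpos
    obtain ⟨hb1, hb2, _⟩ := hbar xl hxl
    by_contra h
    push_neg at h
    rcases eq_or_lt_of_le h with rfl | hlt
    · rw [hb2] at hpos; simp at hpos
    · have := Dmono xl y (barFn xl) (hxl.2.trans hy) hy hlt
      rw [hb2] at this; simp at this; linarith
  have rootgt : ∀ xl ∈ Set.Ioo 0 xstar, ∀ y : ℝ, xstar < y →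
      deriv g y * (y - xl) - (g y - g xl) < 0 → y < barFn xl := by
    intro xl hxl y hy hneg
    obtain ⟨hb1, hb2, _⟩ := hbar xl hxl
    by_contra h
    push_neg at h
    rcases eq_or_lt_of_le h with rfl | hlt
    · rw [hb2] at hneg; simp at hneg
    · have := Dmono xl (barFn xl) y (hxl.2.trans hb1) hb1 hlt
      rw [hb2] at this; simp at this; linarith
  have Dneg : ∀ xl ∈ Set.Ioo 0 xstar, ∀ y : ℝ, xstar < y → y < barFn xl →
      deriv g y * (y - xl) - (g y - g xl) < 0 := by
    intro xl hxl y hy hyb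
    obtain ⟨hb1, hb2, _⟩ := hbar xl hxl
    have := Dmono xl y (barFn xl) (hxl.2.trans hy) hy hyb
    rw [hb2] at this; simpa using this
  -- deriv g xstar < slope from any xl1 < xstar : D xl1 xstar < 0
  have hdanti : StrictAntiOn (deriv g) (Set.Ioo 0 xstar) :=
    hconc.strictAntiOn_deriv (fun x hx => hdiff x hx.1)
  have Dstar : ∀ xl1 : ℝ, 0 < xl1 → xl1 < xstar →
      deriv g xstar * (xstar - xl1) - (g xstar - g xl1) < 0 := by
    intro xl1 h0' h1'
    obtain ⟨c, hc, hcs⟩ := exists_deriv_eq_slope g h1'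
      (hgc.mono (fun x hx => lt_of_lt_of_le h0' hx.1))
      (fun x hx => (hdiff x (Set.mem_Ioi.mpr (h0'.trans hx.1))).differentiableWithinAt)
    obtain ⟨t, ht1, ht2⟩ := exists_between hc.2
    have htmem : t ∈ Set.Ioo (0:ℝ) xstar := ⟨h0'.trans (hc.1.trans ht1), ht2⟩
    have hcmem : c ∈ Set.Ioo (0:ℝ) xstar := ⟨h0'.trans hc.1, hc.2⟩
    have h3 : deriv g t < deriv g c := hdanti hcmem htmem ht1
    -- deriv g xstar ≤ deriv g t by continuity and strict antitonicity
    have h4 : deriv g xstar ≤ deriv g t := by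
      have hten : Filter.Tendsto (deriv g) (nhdsWithin xstar (Set.Ioo t xstar))
          (nhds (deriv g xstar)) := by
        have := (hdcont.continuousAt (isOpen_Ioi.mem_nhds (Set.mem_Ioi.mpr hxs))).tendsto
        exact this.mono_left nhdsWithin_le_nhds
      have hne : (nhdsWithin xstar (Set.Ioo t xstar)).NeBot := by
        apply mem_closure_iff_nhdsWithin_neBot.mp
        rw [closure_Ioo (ne_of_lt ht2)]
        exact ⟨le_of_lt ht2, le_refl _⟩
      refine le_of_tendsto hten ?_
      filter_upwards [self_mem_nhdsWithin] with u hu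
      exact le_of_lt (hdanti htmem ⟨htmem.1.trans hu.1, hu.2⟩ hu.1)
    have h5 : deriv g c = (g xstar - g xl1) / (xstar - xl1) := hcs
    have h6 : deriv g xstar < (g xstar - g xl1) / (xstar - xl1) := by
      rw [← h5]; linarith
    rw [lt_div_iff₀ (by linarith)] at h6
    linarith
  -- key strict antitonicity step
  have key : StrictAntiOn barFn (Set.Ioo 0 xstar) := by
    intro xl1 hxl1 xl2 hxl2 h12
    obtain ⟨hb1, hb2, _⟩ := hbar xl1 hxl1
    set y1 := barFn xl1 with hy1def
    -- the slope function s from xl1 is strictly decreasing on [xl2, y1]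
    set s : ℝ → ℝ := fun y => (g y - g xl1) / (y - xl1) with hsdef
    have hscont : ContinuousOn s (Set.Icc xl2 y1) := by
      apply ContinuousOn.div
      · exact (hgc.mono (fun x hx => lt_of_lt_of_le hxl2.1 hx.1)).sub continuousOn_const
      · exact (continuousOn_id.sub continuousOn_const)
      · intro x hx hc
        have hx1 : x = xl1 := by simpa [sub_eq_zero] using hc
        linarith [hx.1, h12]
    have hsderiv : ∀ y ∈ Set.Ioo xl2 y1, HasDerivAt s
        ((deriv g y * (y - xl1) - (g y - g xl1) * 1) / (y - xl1)^2) y := by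
      intro y hy
      have hy0 : (0:ℝ) < y := hxl2.1.trans hy.1
      have hne : y - xl1 ≠ 0 := by intro hc; nlinarith [hy.1, h12, sub_eq_zero.mp hc]
      exact (((hdiff y (Set.mem_Ioi.mpr hy0)).hasDerivAt.sub_const (g xl1)).div
        ((hasDerivAt_id y).sub_const xl1) hne)
    have hDneg1 : ∀ y ∈ Set.Ioo xl2 y1, deriv g y * (y - xl1) - (g y - g xl1) < 0 := by
      intro y hy
      rcases lt_trichotomy y xstar with h | h | h
      · -- concave region
        have h1 : deriv g y < slope g xl1 y :=
          hconc.deriv_lt_slope hxl1 ⟨hxl2.1.trans hy.1, h⟩ (h12.trans hy.1)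
            (hdiff y (Set.mem_Ioi.mpr (hxl2.1.trans hy.1)))
        rw [slope_def_field, lt_div_iff₀ (by linarith [h12.trans hy.1])] at h1
        linarith
      · subst h; exact Dstar xl1 hxl1.1 hxl1.2
      · exact Dneg xl1 hxl1 y h hy.2
    have hsanti : StrictAntiOn s (Set.Icc xl2 y1) := by
      apply strictAntiOn_of_deriv_neg (convex_Icc _ _) hscont
      intro y hy
      rw [interior_Icc] at hy
      rw [(hsderiv y hy).deriv]
      apply div_neg_of_neg_of_pos
      · simpa using hDneg1 y hy
      · have : y - xl1 ≠ 0 := by intro hc; nlinarith [hy.1, h12, sub_eq_zero.mp hc]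
        positivity
    have hxl2y1 : xl2 < y1 := hxl2.2.trans hb1
    have hslt : s y1 < s xl2 :=
      hsanti (Set.left_mem_Icc.mpr (le_of_lt hxl2y1)) (Set.right_mem_Icc.mpr (le_of_lt hxl2y1))
        hxl2y1
    have hsy1 : s y1 = deriv g y1 := by
      have h21 : y1 - xl1 ≠ 0 := by
        have := hxl1.2.trans hb1
        intro hc; nlinarith [sub_eq_zero.mp hc]
      simp only [hsdef]
      rw [← hb2, mul_div_assoc, div_self h21, mul_one]
    have hsxl2 : s xl2 = (g xl2 - g xl1) / (xl2 - xl1) := rfl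
    have hkey : deriv g y1 * (xl2 - xl1) < g xl2 - g xl1 := by
      rw [hsy1, hsxl2] at hslt
      rw [lt_div_iff₀ (by linarith)] at hslt
      linarith
    -- now D xl2 y1 > 0
    have hDpos : 0 < deriv g y1 * (y1 - xl2) - (g y1 - g xl2) := by
      have h0' : deriv g y1 * (y1 - xl1) - (g y1 - g xl1) = 0 := by rw [hb2]; ring
      nlinarith
    exact rootlt xl2 hxl2 y1 hb1 hDpos
  refine ⟨key, ?_, ?_⟩
  · -- continuity
    intro xl0 hxl0
    obtain ⟨hb1, hb2, _⟩ := hbar xl0 hxl0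
    rw [ContinuousWithinAt, Metric.tendsto_nhdsWithin_nhds]
    intro ε hε
    set ε' := min (ε/2) ((barFn xl0 - xstar)/2) with hε'def
    have hε' : 0 < ε' := lt_min (by linarith) (by linarith)
    set ym := barFn xl0 - ε' with hymdef
    set yp := barFn xl0 + ε' with hypdef
    have hym : xstar < ym := by
      have := min_le_right (ε/2) ((barFn xl0 - xstar)/2); simp only [hymdef]; linarith [this]
    have hyp : xstar < yp := by simp only [hypdef]; linarith
    have hDm : deriv g ym * (ym - xl0) - (g ym - g xl0) < 0 :=
      Dneg xl0 hxl0 ym hym (by simp only [hymdef]; linarith)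
    have hDp : 0 < deriv g yp * (yp - xl0) - (g yp - g xl0) := by
      have := Dmono xl0 (barFn xl0) yp (hxl0.2.trans hb1) hb1 (by simp only [hypdef]; linarith)
      rw [hb2] at this; simpa using this
    -- continuity of D in xl at xl0
    have hcontm : ContinuousAt (fun xl => deriv g ym * (ym - xl) - (g ym - g xl)) xl0 := by
      apply ContinuousAt.sub
      · exact (continuousAt_const.mul (continuousAt_const.sub continuousAt_id))
      · exact continuousAt_const.sub (hdiff xl0 (Set.mem_Ioi.mpr hxl0.1)).continuousAt
    have hcontp : ContinuousAt (fun xl => deriv g yp * (yp - xl) - (g yp - g xl)) xl0 := by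
      apply ContinuousAt.sub
      · exact (continuousAt_const.mul (continuousAt_const.sub continuousAt_id))
      · exact continuousAt_const.sub (hdiff xl0 (Set.mem_Ioi.mpr hxl0.1)).continuousAt
    have hev : ∀ᶠ xl in nhds xl0, (deriv g ym * (ym - xl) - (g ym - g xl) < 0) ∧
        (0 < deriv g yp * (yp - xl) - (g yp - g xl)) := by
      filter_upwards [hcontm.eventually (eventually_lt_nhds hDm),
        hcontp.eventually (eventually_gt_nhds hDp)] with xl h1 h2
      exact ⟨h1, h2⟩
    rw [Metric.eventually_nhds_iff] at hev
    obtain ⟨δ, hδ, hδh⟩ := hev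
    refine ⟨δ, hδ, ?_⟩
    intro xl hxl hdist
    have hxlm := hδh hdist
    have h1 : barFn xl < yp := rootlt xl hxl yp hyp hxlm.2
    have h2 : ym < barFn xl := rootgt xl hxl ym hym hxlm.1
    rw [Real.dist_eq]
    rw [abs_lt]
    constructor
    · simp only [hymdef] at h2
      have : ε' ≤ ε/2 := min_le_left _ _
      linarith
    · simp only [hypdef] at h1
      have : ε' ≤ ε/2 := min_le_left _ _
      linarith
  · -- limit at xstar
    rw [Metric.tendsto_nhdsWithin_nhds]
    intro ε hε
    set yp := xstar + ε/2 with hypdef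
    have hyp : xstar < yp := by simp only [hypdef]; linarith
    -- D xstar yp > 0 via MVT
    have hDp : 0 < deriv g yp * (yp - xstar) - (g yp - g xstar) := by
      obtain ⟨c, hc, hcs⟩ := exists_deriv_eq_slope g hyp
        (hgc.mono (fun x hx => lt_of_lt_of_le hxs hx.1))
        (fun x hx => (hdiff x (Set.mem_Ioi.mpr (hxs.trans hx.1))).differentiableWithinAt)
      have h3 : deriv g c < deriv g yp := hmono (Set.mem_Ioi.mpr hc.1) (Set.mem_Ioi.mpr hyp) hc.2
      rw [hcs] at h3
      rw [div_lt_iff₀ (by linarith)] at h3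
      linarith
    have hcontp : ContinuousAt (fun xl => deriv g yp * (yp - xl) - (g yp - g xl)) xstar := by
      apply ContinuousAt.sub
      · exact (continuousAt_const.mul (continuousAt_const.sub continuousAt_id))
      · exact continuousAt_const.sub (hdiff xstar (Set.mem_Ioi.mpr hxs)).continuousAt
    have hev : ∀ᶠ xl in nhds xstar, 0 < deriv g yp * (yp - xl) - (g yp - g xl) :=
      hcontp.eventually (eventually_gt_nhds hDp)
    rw [Metric.eventually_nhds_iff] at hev
    obtain ⟨δ₀, hδ₀, hδh⟩ := hev
    refine ⟨min δ₀ xstar, lt_min hδ₀ hxs, ?_⟩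
    intro xl hxl hdist
    have hd1 : dist xl xstar < δ₀ := lt_of_lt_of_le hdist (min_le_left _ _)
    have hd2 : dist xl xstar < xstar := lt_of_lt_of_le hdist (min_le_right _ _)
    rw [Real.dist_eq, abs_lt] at hd2
    have hxlmem : xl ∈ Set.Ioo 0 xstar := ⟨by linarith, hxl⟩
    obtain ⟨hb1, _, _⟩ := hbar xl hxlmem
    have h1 : barFn xl < yp := rootlt xl hxlmem yp hyp (hδh hd1)
    rw [Real.dist_eq, abs_lt]
    constructor
    · linarith
    · simp only [hypdef] at h1; linarith
end

section
/- Let g be C² on [0,∞) with g(0)=0, g' > 0, strictly concave on (0,x*) and strictly convex on (x*,∞), with g'(x)→∞ as x→∞, and let 0 < k ≤ 1. Then the system R(x̄; x̲, x̄) := g(x̄)/(g(x̄)-g(x̲)) = 1/k together with the smooth-fit equation g'(x̄)(x̄-x̲) = g(x̄)-g(x̲) has a unique solution (x̲, x̄) with 0 ≤ x̲ < x* < x̄; moreover x̲ = 0 if k = 1 and x̲ > 0 if k < 1. -/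
open Set Filter

set_option maxHeartbeats 2000000 in
theorem stmt9 (g : ℝ → ℝ) (xstar : ℝ) (k : ℝ)
    (hC2 : ContDiffOn ℝ 2 g (Set.Ici 0))
    (h0 : g 0 = 0) (hd : ∀ x : ℝ, 0 ≤ x → 0 < deriv g x)
    (hxs : 0 < xstar)
    (hconc : StrictConcaveOn ℝ (Set.Ioo 0 xstar) g)
    (hconv : StrictConvexOn ℝ (Set.Ioi xstar) g)
    (hinf : Filter.Tendsto (deriv g) Filter.atTop Filter.atTop)
    (hk0 : 0 < k) (hk1 : k ≤ 1) :
    ∃ xl xb : ℝ, 0 ≤ xl ∧ xl < xstar ∧ xstar < xb ∧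
      g xb / (g xb - g xl) = 1/k ∧
      deriv g xb * (xb - xl) = g xb - g xl ∧
      (∀ xl' xb' : ℝ, 0 ≤ xl' → xl' < xb' →
        g xb' / (g xb' - g xl') = 1/k →
        deriv g xb' * (xb' - xl') = g xb' - g xl' →
        xl' = xl ∧ xb' = xb) ∧
      (k = 1 → xl = 0) ∧ (k < 1 → 0 < xl) := by
  have hdiff : ∀ x : ℝ, 0 ≤ x → DifferentiableAt ℝ g x := by
    intro x hx
    by_contra h
    have := hd x hx
    rw [deriv_zero_of_not_differentiableAt h] at this
    exact lt_irrefl 0 this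
  have hgc : ContinuousOn g (Ici 0) := fun x hx =>
    (hdiff x hx).continuousAt.continuousWithinAt
  have hgm : StrictMonoOn g (Ici 0) := by
    apply strictMonoOn_of_deriv_pos (convex_Ici 0) hgc
    intro x hx
    rw [interior_Ici] at hx
    exact hd x (le_of_lt hx)
  have hgpos : ∀ x : ℝ, 0 < x → 0 < g x := by
    intro x hx
    have := hgm (self_mem_Ici) (le_of_lt hx : (0:ℝ) ≤ x) hx
    rwa [h0] at this
  have hdc : ContinuousOn (deriv g) (Ioi 0) :=
    (hC2.mono (Ioi_subset_Ici le_rfl)).continuousOn_deriv_of_isOpen isOpen_Ioi one_le_two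
  have hdca : ∀ x : ℝ, 0 < x → ContinuousAt (deriv g) x := fun x hx =>
    hdc.continuousAt (isOpen_Ioi.mem_nhds hx)
  have hmvt : ∀ a b : ℝ, 0 ≤ a → a < b →
      ∃ c ∈ Ioo a b, deriv g c = (g b - g a) / (b - a) := by
    intro a b ha hab
    refine exists_deriv_eq_slope g hab (hgc.mono ?_) (fun x hx => (hdiff x ?_).differentiableWithinAt)
    · exact Icc_subset_Ici_iff hab.le |>.2 ha
    · exact le_of_lt (lt_of_le_of_lt ha hx.1)
  have M1open : StrictAntiOn (deriv g) (Ioo 0 xstar) :=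
    hconc.strictAntiOn_deriv (fun x hx => hdiff x hx.1.le)
  have M2open : StrictMonoOn (deriv g) (Ioi xstar) :=
    hconv.strictMonoOn_deriv (fun x hx => hdiff x (le_of_lt (lt_trans hxs hx)))
  -- extension of antitonicity to the right endpoint xstar
  have M1T : ∀ x y : ℝ, 0 < x → x < y → y ≤ xstar → deriv g y < deriv g x := by
    intro x y hx hxy hyx
    rcases eq_or_lt_of_le hyx with rfl | hy
    · -- y = xstar
      obtain ⟨u, hu1, hu2⟩ := exists_between hxy
      have hux : u ∈ Ioo (0:ℝ) y := ⟨lt_trans hx hu1, hu2⟩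
      have h1 : deriv g u < deriv g x := M1open ⟨hx, hxy⟩ hux hu1
      have h2 : deriv g y ≤ deriv g u := by
        have htend : Tendsto (deriv g) (nhdsWithin y (Iio y)) (nhds (deriv g y)) :=
          ((hdca y (lt_trans hx hxy)).tendsto).mono_left nhdsWithin_le_nhds
        refine le_of_tendsto htend ?_
        have hEv : ∀ᶠ t in nhdsWithin y (Iio y), u < t :=
          nhdsWithin_le_nhds (Ioi_mem_nhds hu2)
        filter_upwards [hEv, self_mem_nhdsWithin] with t ht1 ht2
        exact le_of_lt (M1open hux ⟨lt_trans hux.1 ht1, ht2⟩ ht1)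
      exact lt_of_le_of_lt h2 h1
    · exact M1open ⟨hx, lt_trans hxy hy⟩ ⟨lt_trans hx hxy, hy⟩ hxy
  have M2T : ∀ x y : ℝ, xstar ≤ x → x < y → deriv g x < deriv g y := by
    intro x y hx hxy
    rcases eq_or_lt_of_le hx with rfl | hx'
    · obtain ⟨u, hu1, hu2⟩ := exists_between hxy
      have h1 : deriv g u < deriv g y := M2open hu1 (lt_trans hu1 hu2) hu2
      have h2 : deriv g xstar ≤ deriv g u := by
        have htend : Tendsto (deriv g) (nhdsWithin xstar (Ioi xstar)) (nhds (deriv g xstar)) :=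
          ((hdca xstar hxs).tendsto).mono_left nhdsWithin_le_nhds
        refine le_of_tendsto htend ?_
        have hEv : ∀ᶠ t in nhdsWithin xstar (Ioi xstar), t < u :=
          nhdsWithin_le_nhds (Iio_mem_nhds hu1)
        filter_upwards [hEv, self_mem_nhdsWithin] with t ht1 ht2
        exact le_of_lt (M2open ht2 hu1 ht1)
      exact lt_of_le_of_lt h2 h1
    · exact M2open hx' (lt_trans hx' hxy) hxy
  -- F = fun x => deriv g x * x - g x is strictly decreasing on [0,xstar]
  have Fanti : ∀ x y : ℝ, 0 ≤ x → x < y → y ≤ xstar →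
      deriv g y * y - g y < deriv g x * x - g x := by
    intro x y hx hxy hyx
    obtain ⟨c, hc, hceq⟩ := hmvt x y hx hxy
    have hslope : g y - g x = deriv g c * (y - x) := by
      have := (eq_div_iff (by linarith : y - x ≠ 0)).1 hceq
      linarith [this]
    have h1 : deriv g y < deriv g c := M1T c y (lt_of_le_of_lt hx hc.1) hc.2 hyx
    rcases eq_or_lt_of_le hx with rfl | hx'
    · rw [h0] at hslope ⊢
      nlinarith [h1, hxy]
    · have h2 : deriv g y < deriv g x := M1T x y hx' hxy hyx
      nlinarith [h1, h2, hxy, hx']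
  have Fmono : ∀ x y : ℝ, xstar ≤ x → x < y →
      deriv g x * x - g x < deriv g y * y - g y := by
    intro x y hx hxy
    obtain ⟨c, hc, hceq⟩ := hmvt x y (le_trans hxs.le hx) hxy
    have hslope : g y - g x = deriv g c * (y - x) := by
      have := (eq_div_iff (by linarith : y - x ≠ 0)).1 hceq
      linarith [this]
    have h1 : deriv g c < deriv g y := M2T c y (le_trans hx hc.1.le) hc.2
    have h2 : deriv g x < deriv g y := M2T x y hx hxy
    nlinarith [h1, h2, hxy, lt_of_lt_of_le hxs hx]
  have slope_eq : ∀ a b : ℝ, 0 ≤ a → a < b →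
      ∃ c ∈ Ioo a b, g b - g a = deriv g c * (b - a) := by
    intro a b ha hab
    obtain ⟨c, hc, hceq⟩ := hmvt a b ha hab
    refine ⟨c, hc, ?_⟩
    have := (eq_div_iff (by linarith : b - a ≠ 0)).1 hceq
    linarith
  -- tangent line at b > xstar lies strictly below the graph on [xstar, b)
  have H1 : ∀ b t : ℝ, xstar < b → xstar ≤ t → t < b →
      g b + deriv g b * (t - b) < g t := by
    intro b t hb ht htb
    obtain ⟨c, hc, hceq⟩ := slope_eq t b (le_trans hxs.le ht) htb
    have h1 : deriv g c < deriv g b := M2T c b (le_trans ht hc.1.le) hc.2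
    nlinarith [h1, htb]
  have H1' : ∀ b t : ℝ, xstar < b → b < t →
      g b + deriv g b * (t - b) < g t := by
    intro b t hb hbt
    obtain ⟨c, hc, hceq⟩ := slope_eq b t (le_trans hxs.le hb.le) hbt
    have h1 : deriv g b < deriv g c := M2T b c hb.le hc.1
    nlinarith [h1, hbt]
  -- tangent line at xstar lies strictly above the graph on [0, xstar)
  have H2 : ∀ t : ℝ, 0 ≤ t → t < xstar →
      g t < g xstar + deriv g xstar * (t - xstar) := by
    intro t ht htx
    obtain ⟨c, hc, hceq⟩ := slope_eq t xstar ht htx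
    have h1 : deriv g xstar < deriv g c := M1T c xstar (lt_of_le_of_lt ht hc.1) hc.2 le_rfl
    nlinarith [h1, htx]
  -- concavity step lemma
  have concS : ∀ B t u v : ℝ, 0 ≤ t → t < u → u < v → v ≤ xstar →
      g u - g t ≤ B * (u - t) → g v - g u < B * (v - u) := by
    intro B t u v ht htu huv hvx hbound
    obtain ⟨c1, hc1, hs1⟩ := slope_eq t u ht htu
    obtain ⟨c2, hc2, hs2⟩ := slope_eq u v (le_trans ht htu.le) huv
    have hB : deriv g c1 ≤ B := by
      rw [hs1] at hbound
      have : (0:ℝ) < u - t := by linarith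
      exact le_of_mul_le_mul_right (by linarith) this
    have h12 : deriv g c2 < deriv g c1 :=
      M1T c1 c2 (lt_of_le_of_lt ht hc1.1) (lt_trans hc1.2 hc2.1) (le_trans hc2.2.le hvx)
    nlinarith [huv]
  -- existence of the tangency point bstar for k = 1
  have FxstarNeg : deriv g xstar * xstar - g xstar < 0 := by
    have := Fanti 0 xstar le_rfl hxs le_rfl
    rw [h0] at this
    nlinarith [this]
  have Flarge : ∃ B : ℝ, xstar + 1 < B ∧ 0 < deriv g B * B - g B := by
    set u := xstar + 1 with hu
    have hU : ∀ᶠ b in atTop, deriv g u + (1 + |deriv g u * u - g u|) / u ≤ deriv g b :=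
      hinf.eventually_ge_atTop _
    obtain ⟨B, hB1, hB2⟩ := (hU.and (eventually_gt_atTop u)).exists
    refine ⟨B, hB2, ?_⟩
    obtain ⟨c, hc, hs⟩ := slope_eq u B (by positivity) hB2
    have h1 : deriv g c < deriv g B := M2T c B (by simp [hu] at hc ⊢; linarith [hc.1]) hc.2
    have hupos : (0:ℝ) < u := by positivity
    have h2 : (1 + |deriv g u * u - g u|) ≤ (deriv g B - deriv g u) * u := by
      have h2' : (1 + |deriv g u * u - g u|) / u ≤ deriv g B - deriv g u := by linarith
      calc (1 + |deriv g u * u - g u|) = (1 + |deriv g u * u - g u|) / u * u := by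
            field_simp
        _ ≤ (deriv g B - deriv g u) * u := by
            exact mul_le_mul_of_nonneg_right h2' hupos.le
    have h3 : deriv g B * B - g B ≥ deriv g u * u - g u + (deriv g B - deriv g u) * u := by
      nlinarith [h1, hB2]
    have := neg_abs_le (deriv g u * u - g u)
    linarith
  obtain ⟨B, hB1, hB2⟩ := Flarge
  have hxB : xstar < B := by linarith
  have Fcont : ContinuousOn (fun x => deriv g x * x - g x) (Icc xstar B) := by
    apply ContinuousOn.sub
    · exact ((hdc.mono (fun x hx => lt_of_lt_of_le hxs hx.1)).mul continuousOn_id)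
    · exact hgc.mono (fun x hx => le_trans hxs.le hx.1)
  obtain ⟨bs, hbsmem, hbs0⟩ :=
    intermediate_value_Ioo hxB.le Fcont (show (0:ℝ) ∈ Ioo _ _ from ⟨FxstarNeg, hB2⟩)
  have hbsx : xstar < bs := hbsmem.1
  have Fbs0 : deriv g bs * bs = g bs := by
    have : deriv g bs * bs - g bs = 0 := hbs0
    linarith
  have Fzero_unique : ∀ b : ℝ, 0 < b → deriv g b * b = g b → b = bs := by
    intro b hb hFb
    rcases lt_trichotomy b bs with h | h | h
    · exfalso
      rcases le_or_gt b xstar with hbx | hbx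
      · have := Fanti 0 b le_rfl hb hbx
        rw [h0] at this
        nlinarith [this]
      · have := Fmono b bs hbx.le h
        nlinarith [this, Fbs0]
    · exact h
    · exfalso
      have := Fmono bs b hbsx.le h
      nlinarith [this, Fbs0]
  -- translation of the first equation
  have eq1_translate : ∀ a b : ℝ, 0 ≤ a → a < b →
      g b / (g b - g a) = 1/k → g a = (1-k) * g b := by
    intro a b ha hab heq
    have hD : 0 < g b - g a := sub_pos.2 (hgm ha (le_trans ha hab.le) hab)
    have := heq
    rw [div_eq_div_iff (ne_of_gt hD) (ne_of_gt hk0)] at this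
    ring_nf at this ⊢
    nlinarith [this]
  -- region: any solution of the smooth-fit equation has a < xstar < b
  have region : ∀ a b : ℝ, 0 ≤ a → a < b →
      deriv g b * (b - a) = g b - g a → xstar < b ∧ a < xstar := by
    intro a b ha hab heq2
    have hbx : xstar < b := by
      by_contra hbx
      push_neg at hbx
      obtain ⟨c, hc, hs⟩ := slope_eq a b ha hab
      have h1 : deriv g b < deriv g c := M1T c b (lt_of_le_of_lt ha hc.1) hc.2 hbx
      nlinarith [h1, hab]
    refine ⟨hbx, ?_⟩
    by_contra hax
    push_neg at hax
    have := H1 b a hbx hax hab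
    nlinarith [this]
  -- key comparison: two solutions cannot have b1 < b2
  have key : ∀ a1 b1 a2 b2 : ℝ, 0 ≤ a1 → a1 < b1 → 0 ≤ a2 → a2 < b2 →
      g a1 = (1-k) * g b1 → g a2 = (1-k) * g b2 →
      deriv g b1 * (b1 - a1) = g b1 - g a1 →
      deriv g b2 * (b2 - a2) = g b2 - g a2 →
      b1 < b2 → False := by
    intro a1 b1 a2 b2 ha1 hab1 ha2 hab2 hg1 hg2 he1 he2 hbb
    obtain ⟨hb1x, ha1x⟩ := region a1 b1 ha1 hab1 he1
    obtain ⟨hb2x, ha2x⟩ := region a2 b2 ha2 hab2 he2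
    rcases eq_or_lt_of_le hk1 with hk | hk
    · -- k = 1 : a1 = a2 = 0 and both b solve F = 0, so b1 = b2
      rw [← hk] at hg1 hg2
      simp at hg1 hg2
      have ha10 : a1 = 0 := by
        rcases eq_or_lt_of_le ha1 with h | h
        · exact h.symm
        · exact absurd hg1 (ne_of_gt (hgpos a1 h))
      have ha20 : a2 = 0 := by
        rcases eq_or_lt_of_le ha2 with h | h
        · exact h.symm
        · exact absurd hg2 (ne_of_gt (hgpos a2 h))
      rw [ha10, h0] at he1
      rw [ha20, h0] at he2
      have hb1 : b1 = bs := Fzero_unique b1 (lt_of_le_of_lt ha1 hab1) (by linarith [he1])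
      have hb2 : b2 = bs := Fzero_unique b2 (lt_of_le_of_lt ha2 hab2) (by linarith [he2])
      rw [hb1, hb2] at hbb
      exact lt_irrefl _ hbb
    · -- k < 1 : a_i > 0
      have hgb1 : 0 < g b1 := hgpos b1 (lt_of_le_of_lt ha1 hab1)
      have hgb2 : 0 < g b2 := hgpos b2 (lt_of_le_of_lt ha2 hab2)
      have ha1p : 0 < a1 := by
        rcases eq_or_lt_of_le ha1 with h | h
        · exfalso; rw [← h, h0] at hg1; nlinarith [hg1]
        · exact h
      have ha2p : 0 < a2 := by
        rcases eq_or_lt_of_le ha2 with h | h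
        · exfalso; rw [← h, h0] at hg2; nlinarith [hg2]
        · exact h
      -- tangent line comparison
      have A1 : g b2 + deriv g b2 * (b1 - b2) < g b1 := H1 b2 b1 hb2x hb1x.le hbb
      have A2 : g b1 + deriv g b1 * (b2 - b1) < g b2 := H1' b1 b2 hb1x hbb
      have h12 : deriv g b1 < deriv g b2 := by nlinarith [A1, A2, hbb]
      have hga1 : g a1 = g b1 + deriv g b1 * (a1 - b1) := by linarith [he1]
      have hb2a1 : 0 < g a1 - (g b2 + deriv g b2 * (a1 - b2)) := by nlinarith [A1, h12, hab1]
      have A4 : 0 < g xstar - (g b2 + deriv g b2 * (xstar - b2)) := by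
        have := H1 b2 xstar hb2x le_rfl hb2x
        linarith
      have ha2eq : g a2 - (g b2 + deriv g b2 * (a2 - b2)) = 0 := by linarith [he2]
      -- a1 cannot be < a2
      have hnotlt : ¬ a1 < a2 := by
        intro hlt
        have e1 : deriv g b2 * (a2 - b2) - deriv g b2 * (a1 - b2) = deriv g b2 * (a2 - a1) := by
          ring
        have hb : g a2 - g a1 ≤ deriv g b2 * (a2 - a1) := by linarith [hb2a1, ha2eq, e1]
        have hcs := concS (deriv g b2) a1 a2 xstar ha1p.le hlt ha2x le_rfl hb
        have e2 : deriv g b2 * (a2 - b2) + deriv g b2 * (xstar - a2) = deriv g b2 * (xstar - b2) := by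
          ring
        linarith [hcs, ha2eq, A4, e2]
      have hne : a1 ≠ a2 := by
        intro h
        rw [h] at hg1
        have : g b1 = g b2 := by nlinarith [hg1, hg2, hk]
        have hbeq := hgm.injOn (le_of_lt (lt_of_le_of_lt ha1 hab1) : b1 ∈ Ici (0:ℝ))
          (le_of_lt (lt_of_le_of_lt ha2 hab2) : b2 ∈ Ici (0:ℝ)) this
        rw [hbeq] at hbb
        exact lt_irrefl _ hbb
      have ha21 : a2 < a1 := lt_of_le_of_ne (not_lt.1 hnotlt) (Ne.symm hne)
      have : g a2 < g a1 := hgm ha2p.le ha1p.le ha21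
      have hgb : g b2 < g b1 := by nlinarith [hg1, hg2, hk]
      have : b2 < b1 := by
        by_contra hcon
        push_neg at hcon
        rcases eq_or_lt_of_le hcon with h | h
        · rw [h] at hgb; exact lt_irrefl _ hgb
        · exact absurd (hgm (by linarith : (0:ℝ) ≤ b1) (by linarith : (0:ℝ) ≤ b2) h) (not_lt.2 hgb.le)
      linarith
  have hbspos : 0 < bs := lt_trans hxs hbsx
  have hgbs0 : 0 < g bs := hgpos bs hbspos
  rcases lt_or_eq_of_le hk1 with hk | hkeq
  · -- k < 1
    have hex : ∃ c : ℝ, xstar < c ∧ c < bs ∧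
        0 < c - k * g c / deriv g c ∧ c - k * g c / deriv g c < c ∧
        g (c - k * g c / deriv g c) = (1-k) * g c := by
      have hkl : (0:ℝ) < 1 - k := by linarith
      have hbspos : 0 < bs := lt_trans hxs hbsx
      have hgbs : 0 < g bs := hgpos bs hbspos
      have hGbs : 0 < deriv g bs * bs - k * g bs := by
        have e : deriv g bs * bs - k * g bs = (1-k) * g bs := by rw [Fbs0]; ring
        rw [e]; positivity
      set S : Set ℝ := {b | b ∈ Icc xstar bs ∧ deriv g b * b - k * g b ≤ 0} ∪ {xstar} with hS
      have GcontOn : ContinuousOn (fun b => deriv g b * b - k * g b) (Icc xstar bs) := by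
        apply ContinuousOn.sub
        · exact (hdc.mono (fun x hx => lt_of_lt_of_le hxs hx.1)).mul continuousOn_id
        · exact continuousOn_const.mul (hgc.mono (fun x hx => le_trans hxs.le hx.1))
      have hSclosed : IsClosed S := by
        apply IsClosed.union
        · have heqS : {b | b ∈ Icc xstar bs ∧ deriv g b * b - k * g b ≤ 0} =
              Icc xstar bs ∩ (fun b => deriv g b * b - k * g b) ⁻¹' (Iic 0) := rfl
          rw [heqS]
          exact GcontOn.preimage_isClosed_of_isClosed isClosed_Icc isClosed_Iic
        · exact isClosed_singleton
      have hSne : S.Nonempty := ⟨xstar, Or.inr rfl⟩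
      have hSsub : ∀ x ∈ S, x ≤ bs := by
        rintro x (⟨hx, _⟩ | rfl)
        · exact hx.2
        · exact hbsx.le
      have hSbdd : BddAbove S := ⟨bs, hSsub⟩
      set b2 := sSup S with hb2
      have hb2mem : b2 ∈ S := hSclosed.csSup_mem hSne hSbdd
      have hb2ge : xstar ≤ b2 := le_csSup hSbdd (Or.inr rfl)
      have hb2le : b2 ≤ bs := csSup_le hSne hSsub
      have hb2lt : b2 < bs := by
        rcases hb2mem with ⟨_, hG⟩ | heq
        · exact lt_of_le_of_ne hb2le (fun h => by rw [h] at hG; linarith)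
        · rw [mem_singleton_iff] at heq; rw [heq]; exact hbsx
      have hb2pos : 0 < b2 := lt_of_lt_of_le hxs hb2ge
      have Gpos : ∀ t : ℝ, b2 < t → t ≤ bs → 0 < deriv g t * t - k * g t := by
        intro t ht1 ht2
        by_contra h
        push_neg at h
        have : t ∈ S := Or.inl ⟨⟨le_trans hb2ge ht1.le, ht2⟩, h⟩
        exact absurd (le_csSup hSbdd this) (not_le.2 ht1)
      have Gb2 : 0 ≤ deriv g b2 * b2 - k * g b2 := by
        have htend : Tendsto (fun t => deriv g t * t - k * g t) (nhdsWithin b2 (Ioi b2))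
            (nhds (deriv g b2 * b2 - k * g b2)) := by
          apply Tendsto.mono_left _ nhdsWithin_le_nhds
          exact (((hdca b2 hb2pos).mul continuousAt_id).sub
            (continuousAt_const.mul (hdiff b2 hb2pos.le).continuousAt)).tendsto
        refine ge_of_tendsto htend ?_
        have hEv : ∀ᶠ t in nhdsWithin b2 (Ioi b2), t < bs :=
          nhdsWithin_le_nhds (Iio_mem_nhds hb2lt)
        filter_upwards [hEv, self_mem_nhdsWithin] with t ht1 ht2
        exact (Gpos t ht2 ht1.le).le
      -- A b = b - k g b / deriv g b rewritten
      have hA : ∀ t : ℝ, 0 < t →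
          t - k * g t / deriv g t = (deriv g t * t - k * g t) / deriv g t := by
        intro t ht
        have hne : deriv g t ≠ 0 := ne_of_gt (hd t ht.le)
        field_simp
      have hAnn : ∀ t : ℝ, b2 ≤ t → t ≤ bs → 0 ≤ t - k * g t / deriv g t := by
        intro t ht1 ht2
        have htpos : 0 < t := lt_of_lt_of_le hb2pos ht1
        rw [hA t htpos]
        rcases eq_or_lt_of_le ht1 with heq | hlt
        · rw [← heq]
          exact div_nonneg Gb2 (hd b2 hb2pos.le).le
        · exact (div_pos (Gpos t hlt ht2) (hd t htpos.le)).le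
      -- continuity of Φ
      have Acont : ContinuousOn (fun b => b - k * g b / deriv g b) (Icc b2 bs) := by
        apply ContinuousOn.sub continuousOn_id
        apply ContinuousOn.div
        · exact continuousOn_const.mul (hgc.mono (fun x hx => le_trans hb2pos.le hx.1))
        · exact hdc.mono (fun x hx => lt_of_lt_of_le hb2pos hx.1)
        · exact fun t ht => ne_of_gt (hd t (le_trans hb2pos.le ht.1))
      have Φcont : ContinuousOn (fun b => g (b - k * g b / deriv g b) - (1-k) * g b)
          (Icc b2 bs) := by
        apply ContinuousOn.sub
        · exact hgc.comp Acont (fun t ht => hAnn t ht.1 ht.2)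
        · exact continuousOn_const.mul (hgc.mono (fun x hx => le_trans hb2pos.le hx.1))
      -- Φ b2 < 0
      have Φb2neg : g (b2 - k * g b2 / deriv g b2) - (1-k) * g b2 < 0 := by
        rcases hb2mem with ⟨hIcc, hGle⟩ | heq
        · have hG0 : deriv g b2 * b2 - k * g b2 = 0 := le_antisymm hGle Gb2
          have hA0 : b2 - k * g b2 / deriv g b2 = 0 := by
            rw [hA b2 hb2pos, hG0, zero_div]
          rw [hA0, h0]
          have : 0 < g b2 := hgpos b2 hb2pos
          nlinarith [this]
        · rw [mem_singleton_iff] at heq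
          rw [heq]
          have hdx : 0 < deriv g xstar := hd xstar hxs.le
          have ha00 : 0 ≤ xstar - k * g xstar / deriv g xstar := by
            have := Gb2; rw [heq] at this
            rw [hA xstar hxs]
            exact div_nonneg this hdx.le
          have ha0x : xstar - k * g xstar / deriv g xstar < xstar := by
            have : 0 < k * g xstar / deriv g xstar :=
              div_pos (mul_pos hk0 (hgpos xstar hxs)) hdx
            linarith
          have hH2 := H2 _ ha00 ha0x
          have e : deriv g xstar * ((xstar - k * g xstar / deriv g xstar) - xstar)
              = -(k * g xstar) := by
            field_simp
            ring
          nlinarith [hH2, e]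
      -- Φ bs > 0
      have Φbspos : 0 < g (bs - k * g bs / deriv g bs) - (1-k) * g bs := by
        have hdbs : 0 < deriv g bs := hd bs hbspos.le
        have hAbs : bs - k * g bs / deriv g bs = (1-k) * bs := by
          have : k * g bs / deriv g bs = k * bs := by
            rw [← Fbs0]; field_simp
          rw [this]; ring
        set a0 := (1-k) * bs with ha0def
        rw [hAbs]
        have ha0pos : 0 < a0 := by positivity
        have ha0bs : a0 < bs := by nlinarith [hbspos]
        have htan : (1-k) * g bs = g bs + deriv g bs * (a0 - bs) := by
          have : deriv g bs * (a0 - bs) = -(k * g bs) := by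
            rw [ha0def, ← Fbs0]; ring
          rw [this]; ring
        rcases le_or_gt xstar a0 with hcase | hcase
        · have := H1 bs a0 hbsx hcase ha0bs
          linarith [htan]
        · by_contra hno
          push_neg at hno
          have hbound : g a0 - g 0 ≤ deriv g bs * (a0 - 0) := by
            rw [h0]
            have e : deriv g bs * (a0 - bs) = deriv g bs * a0 - deriv g bs * bs := by ring
            have : g a0 ≤ g bs + deriv g bs * (a0 - bs) := by linarith [htan, hno]
            linarith [this, e, Fbs0]
          have hcs := concS (deriv g bs) 0 a0 xstar le_rfl ha0pos hcase le_rfl hbound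
          have hH1 := H1 bs xstar hbsx le_rfl hbsx
          have e2 : deriv g bs * (xstar - bs) = deriv g bs * (xstar - a0) + deriv g bs * a0
              - deriv g bs * bs := by ring
          have : g a0 ≤ g bs + deriv g bs * (a0 - bs) := by linarith [htan, hno]
          have e3 : deriv g bs * (a0 - bs) = deriv g bs * a0 - deriv g bs * bs := by ring
          linarith [hcs, hH1, e2, this, e3, Fbs0]
      obtain ⟨c, hcmem, hc0⟩ := intermediate_value_Ioo hb2lt.le Φcont
        (show (0:ℝ) ∈ Ioo _ _ from ⟨Φb2neg, Φbspos⟩)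
      have hcx : xstar < c := lt_of_le_of_lt hb2ge hcmem.1
      have hcpos : 0 < c := lt_trans hxs hcx
      have hdcpos : 0 < deriv g c := hd c hcpos.le
      have hGc : 0 < deriv g c * c - k * g c := Gpos c hcmem.1 hcmem.2.le
      refine ⟨c, hcx, hcmem.2, ?_, ?_, ?_⟩
      · rw [hA c hcpos]
        exact div_pos hGc hdcpos
      · have : 0 < k * g c / deriv g c := div_pos (mul_pos hk0 (hgpos c hcpos)) hdcpos
        linarith
      · have : g (c - k * g c / deriv g c) - (1-k) * g c = 0 := hc0
        linarith
    obtain ⟨c, hcx, hcbs, hxlpos, hxlc, hgxl⟩ := hex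
    have hcpos : 0 < c := lt_trans hxs hcx
    have hdcpos : 0 < deriv g c := hd c hcpos.le
    have hgcpos : 0 < g c := hgpos c hcpos
    set xl := c - k * g c / deriv g c with hxldef
    have hsub : g c - g xl = k * g c := by rw [hgxl]; ring
    have heq2 : deriv g c * (c - xl) = g c - g xl := by
      have e1 : c - xl = k * g c / deriv g c := by rw [hxldef]; ring
      rw [e1, hsub]
      field_simp
    have heq1 : g c / (g c - g xl) = 1/k := by
      rw [hsub]
      rw [div_eq_div_iff (by positivity) (ne_of_gt hk0)]
      ring
    have hxlx : xl < xstar := (region xl c hxlpos.le hxlc heq2).2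
    refine ⟨xl, c, hxlpos.le, hxlx, hcx, heq1, heq2, ?_, ?_, fun _ => hxlpos⟩
    · intro xl' xb' h1' h2' h3' h4'
      have hga' : g xl' = (1-k) * g xb' := eq1_translate xl' xb' h1' h2' h3'
      rcases lt_trichotomy xb' c with hlt | heqc | hgt
      · exact absurd hlt (by
          intro hlt'
          exact key xl' xb' xl c h1' h2' hxlpos.le hxlc hga' hgxl h4' heq2 hlt')
      · refine ⟨?_, heqc⟩
        have : g xl' = g xl := by rw [hga', heqc, hgxl]
        exact hgm.injOn h1' hxlpos.le this
      · exact absurd hgt (by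
          intro hgt'
          exact key xl c xl' xb' hxlpos.le hxlc h1' h2' hgxl hga' heq2 h4' hgt')
    · intro hke
      rw [hke] at hk
      exact absurd hk (lt_irrefl 1)
  · -- k = 1
    refine ⟨0, bs, le_rfl, hxs, hbsx, ?_, ?_, ?_, fun _ => rfl, ?_⟩
    · rw [hkeq, h0, sub_zero, div_self (ne_of_gt hgbs0)]
      norm_num
    · rw [h0, sub_zero, sub_zero]
      exact Fbs0
    · intro xl' xb' h1' h2' h3' h4'
      have hga' : g xl' = (1-k) * g xb' := eq1_translate xl' xb' h1' h2' h3'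
      have hxl0 : g xl' = 0 := by rw [hga', hkeq]; ring
      have hxl'0 : xl' = 0 := by
        rcases eq_or_lt_of_le h1' with h | h
        · exact h.symm
        · exact absurd hxl0 (ne_of_gt (hgpos xl' h))
      refine ⟨hxl'0, ?_⟩
      apply Fzero_unique xb' (lt_of_le_of_lt h1' h2')
      rw [hxl'0, h0] at h4'
      linarith [h4']
    · intro hke
      rw [hkeq] at hke
      exact absurd hke (lt_irrefl 1)
end

section
/- Let g be C² on [0,∞) with g(0)=0, g'>0, g''<0 on (0,x*) and g''>0 on (x*,∞) for some x*>0. Fix 0 ≤ x̲ < x* < x̄ with g'(x̄)(x̄ - x̲) = g(x̄) - g(x̲). Define K(x) = J(x) - x, where J(x) = g(x)·(x̄-x̲)/(g(x̄)-g(x̲)) for 0 ≤ x ≤ x̄ and J(x) = x - x̲ + J(x̲) for x > x̄. Then K(0) = 0, K(x̲) = K(x̄), K is increasing on [0, x̲], and for all 0 ≤ y ≤ x̲ and x ≥ y one has J(x) ≥ J(y) + x - y. -/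
theorem stmt11 (g : ℝ → ℝ) (xstar xl xb : ℝ) (J K : ℝ → ℝ)
    (hC2 : ContDiffOn ℝ 2 g (Set.Ici 0))
    (h0 : g 0 = 0) (hd : ∀ x : ℝ, 0 ≤ x → 0 < deriv g x)
    (hconc : ∀ x ∈ Set.Ioo 0 xstar, deriv (deriv g) x < 0)
    (hconv : ∀ x : ℝ, xstar < x → 0 < deriv (deriv g) x)
    (hxl : 0 ≤ xl) (h1 : xl < xstar) (h2 : xstar < xb)
    (hsf : deriv g xb * (xb - xl) = g xb - g xl)
    (hJ : J = fun x => if x ≤ xb then g x * (xb - xl) / (g xb - g xl)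
                       else x - xl + g xl * (xb - xl) / (g xb - g xl))
    (hK : K = fun x => J x - x) :
    K 0 = 0 ∧ K xl = K xb ∧ MonotoneOn K (Set.Icc 0 xl) ∧
    ∀ y x : ℝ, 0 ≤ y → y ≤ xl → y ≤ x → J y + x - y ≤ J x := by
  have hxs0 : (0:ℝ) < xstar := lt_of_le_of_lt hxl h1
  have hxb0 : (0:ℝ) ≤ xb := le_of_lt (lt_trans hxs0 h2)
  have hxlb : xl < xb := lt_trans h1 h2
  have hdiff : ∀ x : ℝ, 0 ≤ x → DifferentiableAt ℝ g x := by
    intro x hx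
    by_contra h
    have h' := deriv_zero_of_not_differentiableAt h
    have := hd x hx
    linarith
  have hcg : ContinuousOn g (Set.Ici 0) :=
    fun x hx => (hdiff x hx).continuousAt.continuousWithinAt
  have hgm : StrictMonoOn g (Set.Ici 0) := by
    apply strictMonoOn_of_deriv_pos (convex_Ici 0) hcg
    rw [interior_Ici]
    exact fun x hx => hd x (le_of_lt hx)
  have hD : 0 < g xb - g xl :=
    sub_pos.mpr (hgm hxl (le_of_lt (lt_of_le_of_lt hxl hxlb)) hxlb)
  -- continuity of deriv g on Ici 0
  have hg'cont : ContinuousOn (deriv g) (Set.Ici 0) := by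
    have hc := hC2.continuousOn_derivWithin (uniqueDiffOn_Ici 0) (by norm_num)
    exact hc.congr fun x hx => ((hdiff x hx).derivWithin ((uniqueDiffOn_Ici 0) x hx)).symm
  -- deriv g strictly decreasing on [0,xstar], strictly increasing on [xstar,xb]
  have hg'anti : StrictAntiOn (deriv g) (Set.Icc 0 xstar) := by
    apply strictAntiOn_of_deriv_neg (convex_Icc 0 xstar)
      (hg'cont.mono Set.Icc_subset_Ici_self)
    rw [interior_Icc]; exact hconc
  have hg'mono : StrictMonoOn (deriv g) (Set.Icc xstar xb) := by
    apply strictMonoOn_of_deriv_pos (convex_Icc xstar xb)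
      (hg'cont.mono (fun t ht => le_trans (le_of_lt hxs0) ht.1))
    rw [interior_Icc]; exact fun x hx => hconv x hx.1
  -- key : deriv g xb ≤ deriv g xl
  have hkey : deriv g xb ≤ deriv g xl := by
    by_contra hcon
    push_neg at hcon
    obtain ⟨ξ, hξ, hslope⟩ := exists_deriv_eq_slope g hxlb
      (hcg.mono (fun t ht => le_trans hxl ht.1))
      (fun t ht => (hdiff t (le_trans hxl (le_of_lt ht.1))).differentiableWithinAt)
    have hξb : deriv g ξ = deriv g xb := by
      rw [hslope, ← hsf, mul_div_assoc, div_self (by linarith : xb - xl ≠ 0), mul_one]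
    have hlt : deriv g ξ < deriv g xb := by
      rcases le_or_gt ξ xstar with hc1 | hc1
      · have := hg'anti ⟨hxl, le_of_lt h1⟩ ⟨le_trans hxl (le_of_lt hξ.1), hc1⟩ hξ.1
        linarith
      · exact hg'mono ⟨le_of_lt hc1, le_of_lt hξ.2⟩ ⟨le_of_lt h2, le_refl _⟩ hξ.2
    linarith
  -- normalization
  have hcpos : 0 < (xb - xl) / (g xb - g xl) := div_pos (by linarith) hD
  have hnorm : deriv g xb * ((xb - xl) / (g xb - g xl)) = 1 := by
    rw [mul_div_assoc'] at *
    rw [hsf]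
    field_simp
  -- F : the smooth formula
  set F : ℝ → ℝ := fun y => g y * (xb - xl) / (g xb - g xl) - y with hF
  have hKF : ∀ z, z ≤ xb → K z = F z := by
    intro z hz
    simp [hK, hJ, if_pos hz, hF]
  have hFeq : F = fun y => g y * ((xb - xl) / (g xb - g xl)) - y := by
    funext y
    show g y * (xb - xl) / (g xb - g xl) - y = g y * ((xb - xl) / (g xb - g xl)) - y
    rw [mul_div_assoc]
  have hF' : ∀ x : ℝ, 0 ≤ x →
      HasDerivAt F (deriv g x * ((xb - xl) / (g xb - g xl)) - 1) x := by
    intro x hx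
    rw [hFeq]
    exact ((hdiff x hx).hasDerivAt.mul_const _).sub (hasDerivAt_id x)
  have hKnhds : ∀ x : ℝ, x < xb → K =ᶠ[nhds x] F := by
    intro x hx
    filter_upwards [Iio_mem_nhds hx] with z hz using hKF z (le_of_lt hz)
  have hFcont : ContinuousOn F (Set.Icc 0 xb) := by
    rw [hFeq]
    exact ((hcg.mono Set.Icc_subset_Ici_self).mul continuousOn_const).sub
      continuousOn_id
  -- generic monotone / antitone helpers
  have hMono : ∀ u v : ℝ, 0 ≤ u → v ≤ xb →
      (∀ t ∈ Set.Icc u v, deriv g xb ≤ deriv g t) → MonotoneOn K (Set.Icc u v) := by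
    intro u v hu hv hge
    apply monotoneOn_of_deriv_nonneg (convex_Icc u v)
      ((hFcont.mono (fun t ht => ⟨le_trans hu ht.1, le_trans ht.2 hv⟩)).congr
        (fun z hz => hKF z (le_trans hz.2 hv)))
    · rw [interior_Icc]
      intro x hx
      exact (((hKnhds x (lt_of_lt_of_le hx.2 hv)).differentiableAt_iff).mpr
        (hF' x (le_trans hu (le_of_lt hx.1))).differentiableAt).differentiableWithinAt
    · rw [interior_Icc]
      intro x hx
      rw [(hKnhds x (lt_of_lt_of_le hx.2 hv)).deriv_eq,
        (hF' x (le_trans hu (le_of_lt hx.1))).deriv]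
      have h3 := hge x ⟨le_of_lt hx.1, le_of_lt hx.2⟩
      nlinarith
  have hAnti : ∀ u v : ℝ, 0 ≤ u → v ≤ xb →
      (∀ t ∈ Set.Icc u v, deriv g t ≤ deriv g xb) → AntitoneOn K (Set.Icc u v) := by
    intro u v hu hv hle
    apply antitoneOn_of_deriv_nonpos (convex_Icc u v)
      ((hFcont.mono (fun t ht => ⟨le_trans hu ht.1, le_trans ht.2 hv⟩)).congr
        (fun z hz => hKF z (le_trans hz.2 hv)))
    · rw [interior_Icc]
      intro x hx
      exact (((hKnhds x (lt_of_lt_of_le hx.2 hv)).differentiableAt_iff).mpr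
        (hF' x (le_trans hu (le_of_lt hx.1))).differentiableAt).differentiableWithinAt
    · rw [interior_Icc]
      intro x hx
      rw [(hKnhds x (lt_of_lt_of_le hx.2 hv)).deriv_eq,
        (hF' x (le_trans hu (le_of_lt hx.1))).deriv]
      have h3 := hle x ⟨le_of_lt hx.1, le_of_lt hx.2⟩
      nlinarith
  -- part 1
  have part1 : K 0 = 0 := by
    rw [hKF 0 hxb0, hF]; simp [h0]
  -- part 2
  have part2 : K xl = K xb := by
    rw [hKF xl (le_of_lt hxlb), hKF xb le_rfl, hF]
    field_simp
    ring
  -- part 3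
  have part3 : MonotoneOn K (Set.Icc 0 xl) := by
    apply hMono 0 xl le_rfl (le_of_lt hxlb)
    intro t ht
    rcases eq_or_lt_of_le ht.2 with h | h
    · rw [h]; exact hkey
    · exact le_trans hkey (le_of_lt
        (hg'anti ⟨ht.1, le_trans ht.2 (le_of_lt h1)⟩ ⟨hxl, le_of_lt h1⟩ h))
  -- K x = K xl for x ≥ xb
  have hKtop : ∀ x, xb < x → K x = K xl := by
    intro x hx
    rw [hKF xl (le_of_lt hxlb), hF]
    simp only [hK, hJ, if_neg (not_le.mpr hx)]
    ring
  -- on [xstar, xb] : K xb ≤ K x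
  have step2 : ∀ x, xstar ≤ x → x ≤ xb → K xb ≤ K x := by
    intro x hx1 hx2
    have ha := hAnti x xb (le_trans (le_of_lt hxs0) hx1) le_rfl
      (fun t ht => hg'mono.monotoneOn ⟨le_trans hx1 ht.1, ht.2⟩
        ⟨le_of_lt h2, le_rfl⟩ ht.2)
    exact ha ⟨le_rfl, hx2⟩ ⟨hx2, le_rfl⟩ hx2
  -- on [xl, xstar] : K xl ≤ K x
  have step1 : ∀ x, xl ≤ x → x ≤ xstar → K xl ≤ K x := by
    intro x hx1 hx2
    by_cases hcase : deriv g xb ≤ deriv g x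
    · have hm := hMono xl x hxl (le_trans hx2 (le_of_lt h2))
        (fun t ht => ?_)
      · exact hm ⟨le_rfl, hx1⟩ ⟨hx1, le_rfl⟩ hx1
      · rcases eq_or_lt_of_le ht.2 with h | h
        · rw [h]; exact hcase
        · exact le_trans hcase (le_of_lt (hg'anti
            ⟨le_trans hxl ht.1, le_trans (le_of_lt h) hx2⟩ ⟨le_trans hxl hx1, hx2⟩ h))
    · push_neg at hcase
      have ha := hAnti x xstar (le_trans hxl hx1) (le_of_lt h2)
        (fun t ht => le_of_lt (lt_of_le_of_lt
          (hg'anti.antitoneOn ⟨le_trans hxl hx1, hx2⟩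
            ⟨le_trans (le_trans hxl hx1) ht.1, ht.2⟩ ht.1) hcase))
      have h4 : K xstar ≤ K x := ha ⟨le_rfl, hx2⟩ ⟨hx2, le_rfl⟩ hx2
      have h5 : K xb ≤ K xstar := step2 xstar le_rfl (le_of_lt h2)
      linarith [part2]
  have hxl_le : ∀ x, xl ≤ x → K xl ≤ K x := by
    intro x hx
    rcases le_or_gt x xstar with h | h
    · exact step1 x hx h
    · rcases le_or_gt x xb with h' | h'
      · rw [part2]; exact step2 x (le_of_lt h) h'
      · rw [hKtop x h']
  refine ⟨part1, part2, part3, ?_⟩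
  intro y x hy0 hyxl hyx
  have hKyx : K y ≤ K x := by
    rcases le_or_gt x xl with h | h
    · exact part3 ⟨hy0, hyxl⟩ ⟨le_trans hy0 hyx, h⟩ hyx
    · exact le_trans (part3 ⟨hy0, hyxl⟩ ⟨hxl, le_rfl⟩ hyxl) (hxl_le x (le_of_lt h))
  rw [hK] at hKyx
  simp only at hKyx
  linarith
end

section
/- Let g be C² on [0,∞) with g(0)=0, g'>0, g''<0 on (0,x*), g''>0 on (x*,∞), and g'→∞ at infinity. Fix c > 0 and suppose (x̲_c, x̄_c) with 0 < x̲_c < x̄_c solves the smooth-fit system g'(x̲_c) = g'(x̄_c) = (g(x̄_c) - g(x̲_c))/(x̄_c - x̲_c - c). Then x̲_c < x* < x̄_c and x̄_c - x̲_c > c. -/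
/-!
Since `g'(x̲) = g'(x̄)`, Rolle's theorem gives a zero of `g''` strictly between `x̲` and `x̄`, and
the sign conditions make `x*` the only zero of `g''` on `(0, ∞)`. As `g` is increasing, the
smooth-fit slope `(g x̄ - g x̲) / (x̄ - x̲ - c) = g'(x̄)` has positive numerator and positive value,
so its denominator is positive too.
-/

open Set

theorem eq_of_eq_zero_of_neg_on_Ioo_of_pos_on_Ioi {φ : ℝ → ℝ} {p s z : ℝ}
    (hneg : ∀ x ∈ Ioo p s, φ x < 0) (hpos : ∀ x, s < x → 0 < φ x) (hpz : p < z)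
    (hz : φ z = 0) : z = s :=
  le_antisymm (not_lt.1 fun h => (hpos z h).ne' hz) (not_lt.1 fun h => (hneg z ⟨hpz, h⟩).ne hz)

theorem stmt14_general (g : ℝ → ℝ) (xstar c xl xb : ℝ)
    (hC2 : ContDiffOn ℝ 2 g (Set.Ici 0))
    (hd : ∀ x : ℝ, 0 ≤ x → 0 < deriv g x)
    (hconc : ∀ x ∈ Set.Ioo 0 xstar, deriv (deriv g) x < 0)
    (hconv : ∀ x : ℝ, xstar < x → 0 < deriv (deriv g) x)
    (hxl : 0 < xl) (hlt : xl < xb)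
    (hsf1 : deriv g xl = deriv g xb)
    (hsf2 : deriv g xb = (g xb - g xl) / (xb - xl - c)) :
    xl < xstar ∧ xstar < xb ∧ c < xb - xl := by
  have hg' : ContinuousOn (deriv g) (Icc xl xb) :=
    (hC2.mono Ioi_subset_Ici_self).continuousOn_deriv_of_isOpen isOpen_Ioi one_le_two
      |>.mono fun x hx => hxl.trans_le hx.1
  obtain ⟨z, ⟨hxlz, hzxb⟩, hz⟩ := exists_deriv_eq_zero hlt hg' hsf1
  obtain rfl := eq_of_eq_zero_of_neg_on_Ioo_of_pos_on_Ioi hconc hconv (hxl.trans hxlz) hz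
  refine ⟨hxlz, hzxb, ?_⟩
  have hg_mono : StrictMonoOn g (Ici 0) :=
    strictMonoOn_of_deriv_pos (convex_Ici 0) hC2.continuousOn fun x hx =>
      hd x (le_of_lt (by simpa using hx))
  have hgap : 0 < g xb - g xl :=
    sub_pos.2 (hg_mono (mem_Ici.2 hxl.le) (mem_Ici.2 (hxl.trans hlt).le) hlt)
  have hslope : 0 < (g xb - g xl) / (xb - xl - c) := hsf2 ▸ hd xb (hxl.trans hlt).le
  linarith [(div_pos_iff_of_pos_left hgap).1 hslope]

theorem stmt14 (g : ℝ → ℝ) (xstar c xl xb : ℝ)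
    (hC2 : ContDiffOn ℝ 2 g (Set.Ici 0))
    (h0 : g 0 = 0) (hd : ∀ x : ℝ, 0 ≤ x → 0 < deriv g x)
    (hconc : ∀ x ∈ Set.Ioo 0 xstar, deriv (deriv g) x < 0)
    (hconv : ∀ x : ℝ, xstar < x → 0 < deriv (deriv g) x)
    (hinf : Filter.Tendsto (deriv g) Filter.atTop Filter.atTop)
    (hc : 0 < c) (hxl : 0 < xl) (hlt : xl < xb)
    (hsf1 : deriv g xl = deriv g xb)
    (hsf2 : deriv g xb = (g xb - g xl) / (xb - xl - c)) :
    xl < xstar ∧ xstar < xb ∧ c < xb - xl :=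
  stmt14_general g xstar c xl xb hC2 hd hconc hconv hxl hlt hsf1 hsf2
end
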